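/- Let A ∈ ℝ^{m×n}, b ∈ ℝ^m, μ ≥ 0, and let κ : ℝ^n → ℝ be convex, nonnegative, positively homogeneous (κ(tx) = tκ(x) for all t ≥ 0 and x ∈ ℝ^n), with κ(0) = 0. If x* minimizes x ↦ (1/2)‖Ax − b‖² + μκ(x) over ℝ^n, then ξ* := b − Ax* satisfies ⟨Aᵀξ*, x⟩ ≤ μκ(x) for all x ∈ ℝ^n, the value equality −(1/2)‖ξ*‖² + ⟨b, ξ*⟩ = (1/2)‖Ax* − b‖² + μκ(x*) holds, and ξ* maximizes ξ ↦ −(1/2)‖ξ‖² + ⟨b, ξ⟩ over the set {ξ ∈ ℝ^m : ⟨Aᵀξ, x⟩ ≤ μκ(x) for all x ∈ ℝ^n}. -/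
import Mathlib


open Matrix

noncomputable def l2norm {m : ℕ} (v : Fin m → ℝ) : ℝ := Real.sqrt (∑ i, (v i) ^ 2)

def dot {m : ℕ} (u v : Fin m → ℝ) : ℝ := ∑ i, u i * v i

section helpers

variable {m : ℕ}

lemma dot_self_nonneg (v : Fin m → ℝ) : 0 ≤ dot v v :=
  Finset.sum_nonneg fun i _ => mul_self_nonneg _

lemma dot_comm' (u v : Fin m → ℝ) : dot u v = dot v u := by
  simp [dot, mul_comm]

lemma dot_add_right (u v w : Fin m → ℝ) : dot u (v + w) = dot u v + dot u w := by
  simp [dot, mul_add, Finset.sum_add_distrib]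

lemma dot_smul_right (t : ℝ) (u v : Fin m → ℝ) : dot u (t • v) = t * dot u v := by
  simp [dot, Finset.mul_sum, mul_left_comm]

lemma dot_sub_right (u v w : Fin m → ℝ) : dot u (v - w) = dot u v - dot u w := by
  simp [dot, mul_sub, Finset.sum_sub_distrib]

lemma dot_add_left (u v w : Fin m → ℝ) : dot (u + v) w = dot u w + dot v w := by
  rw [dot_comm', dot_add_right, dot_comm' w u, dot_comm' w v]

lemma dot_smul_left (t : ℝ) (u v : Fin m → ℝ) : dot (t • u) v = t * dot u v := by
  simp [dot, Finset.mul_sum, mul_assoc]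

lemma dot_neg_left (u v : Fin m → ℝ) : dot (-u) v = -(dot u v) := by
  simp [dot]

lemma dot_neg_neg (u v : Fin m → ℝ) : dot (-u) (-v) = dot u v := by
  simp [dot]

lemma dot_expand (u v : Fin m → ℝ) (t : ℝ) :
    dot (u + t • v) (u + t • v) = dot u u + 2 * t * dot u v + t ^ 2 * dot v v := by
  rw [dot_add_left, dot_add_right, dot_add_right, dot_smul_right,
    dot_smul_left, dot_smul_right, dot_smul_left, dot_comm' v u]
  ring

lemma l2norm_sq (v : Fin m → ℝ) : (l2norm v) ^ 2 = dot v v := by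
  rw [l2norm, Real.sq_sqrt (by positivity)]
  simp [dot, sq]

lemma dot_transpose {n : ℕ} (A : Matrix (Fin m) (Fin n) ℝ) (ξ : Fin m → ℝ)
    (x : Fin n → ℝ) : dot (Aᵀ.mulVec ξ) x = dot ξ (A.mulVec x) := by
  simp only [dot, Matrix.mulVec, dotProduct, Matrix.transpose_apply,
    Finset.sum_mul, Finset.mul_sum]
  rw [Finset.sum_comm]
  apply Finset.sum_congr rfl; intro i _
  apply Finset.sum_congr rfl; intro j _
  ring

lemma aux_limit (c d : ℝ) (h : ∀ t : ℝ, 0 < t → t ≤ 1 → 0 ≤ t * (c + t * d)) :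
    0 ≤ c := by
  by_contra hc
  push_neg at hc
  by_cases hd : d ≤ 0
  · have := h 1 one_pos le_rfl
    nlinarith
  · push_neg at hd
    set t := min 1 (-c / (2 * d)) with ht
    have ht0 : 0 < t := lt_min one_pos (div_pos (by linarith) (by linarith))
    have ht1 : t ≤ 1 := min_le_left _ _
    have htd : t ≤ -c / (2 * d) := min_le_right _ _
    have h2 := h t ht0 ht1
    have h3 : t * (2 * d) ≤ -c := (le_div_iff₀ (by linarith)).mp htd
    nlinarith

end helpers

/-- Strong duality between `min_x (1/2)‖Ax − b‖² + μ κ(x)` and its dual: if `x*` is a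
primal minimizer and `ξ* := b − A x*`, then `ξ*` is dual feasible, the primal and dual
optimal values agree, and `ξ*` maximizes the dual objective over the dual feasible set. -/
theorem strong_duality_gauge {m n : ℕ} (A : Matrix (Fin m) (Fin n) ℝ) (b : Fin m → ℝ)
    (μ : ℝ) (hμ : 0 ≤ μ) (κ : (Fin n → ℝ) → ℝ)
    (hκconv : ConvexOn ℝ Set.univ κ) (hκnn : ∀ x, 0 ≤ κ x)
    (hκhom : ∀ t : ℝ, 0 ≤ t → ∀ x : Fin n → ℝ, κ (t • x) = t * κ x)
    (hκ0 : κ 0 = 0)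
    (xstar : Fin n → ℝ)
    (hxstar : ∀ x : Fin n → ℝ,
      (1/2) * (l2norm (A.mulVec xstar - b))^2 + μ * κ xstar ≤
      (1/2) * (l2norm (A.mulVec x - b))^2 + μ * κ x) :
    (∀ x : Fin n → ℝ, dot (Aᵀ.mulVec (b - A.mulVec xstar)) x ≤ μ * κ x) ∧
    (-(1/2) * (l2norm (b - A.mulVec xstar))^2 + dot b (b - A.mulVec xstar) =
      (1/2) * (l2norm (A.mulVec xstar - b))^2 + μ * κ xstar) ∧
    (∀ ξ : Fin m → ℝ, (∀ x : Fin n → ℝ, dot (Aᵀ.mulVec ξ) x ≤ μ * κ x) →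
      -(1/2) * (l2norm ξ)^2 + dot b ξ ≤
      -(1/2) * (l2norm (b - A.mulVec xstar))^2 + dot b (b - A.mulVec xstar)) := by
  set r : Fin m → ℝ := A.mulVec xstar - b with hr
  set ξs : Fin m → ℝ := b - A.mulVec xstar with hξs
  have hrξ : r = -ξs := by simp [hr, hξs]
  -- subadditivity of κ
  have hsub : ∀ u v : Fin n → ℝ, κ (u + v) ≤ κ u + κ v := by
    intro u v
    have hc := hκconv.2 (Set.mem_univ u) (Set.mem_univ v)
      (by norm_num : (0:ℝ) ≤ 1/2) (by norm_num : (0:ℝ) ≤ 1/2) (by norm_num)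
    simp only [smul_eq_mul] at hc
    have he : u + v = (2:ℝ) • ((1/2 : ℝ) • u + (1/2 : ℝ) • v) := by
      rw [smul_add, smul_smul, smul_smul]; norm_num
    have h2 : κ (u + v) = 2 * κ ((1/2 : ℝ) • u + (1/2 : ℝ) • v) := by
      rw [he, hκhom 2 (by norm_num)]
    linarith
  -- key inequality: feasibility of ξs
  have hfeas : ∀ x : Fin n → ℝ, dot ξs (A.mulVec x) ≤ μ * κ x := by
    intro x
    have key : 0 ≤ (dot r (A.mulVec x) + μ * κ x) +
        0 * ((1/2) * dot (A.mulVec x) (A.mulVec x)) := by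
      rw [zero_mul, add_zero]
      apply aux_limit _ ((1/2) * dot (A.mulVec x) (A.mulVec x))
      intro t ht0 ht1
      have hmain := hxstar (xstar + t • x)
      have hAB : A.mulVec (xstar + t • x) - b = r + t • A.mulVec x := by
        rw [Matrix.mulVec_add, Matrix.mulVec_smul, hr]
        module
      have hκb : κ (xstar + t • x) ≤ κ xstar + t * κ x := by
        calc κ (xstar + t • x) ≤ κ xstar + κ (t • x) := hsub _ _
        _ = κ xstar + t * κ x := by rw [hκhom t ht0.le]
      rw [hAB] at hmain
      rw [l2norm_sq, l2norm_sq, dot_expand] at hmain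
      nlinarith [mul_le_mul_of_nonneg_left hκb hμ]
    rw [zero_mul, add_zero] at key
    have hd : dot r (A.mulVec x) = -(dot ξs (A.mulVec x)) := by
      rw [hrξ, dot_neg_left]
    rw [hd] at key
    linarith
  -- reverse inequality at xstar
  have hrev : μ * κ xstar ≤ dot ξs (A.mulVec xstar) := by
    have key : 0 ≤ -(dot r (A.mulVec xstar) + μ * κ xstar) := by
      apply aux_limit _ ((1/2) * dot (A.mulVec xstar) (A.mulVec xstar))
      intro t ht0 ht1
      have hmain := hxstar ((1 - t) • xstar)
      have hAB : A.mulVec ((1 - t) • xstar) - b = r + (-t) • A.mulVec xstar := by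
        rw [Matrix.mulVec_smul, hr]
        module
      have hκb : κ ((1 - t) • xstar) = (1 - t) * κ xstar := hκhom _ (by linarith) _
      rw [hAB, hκb] at hmain
      rw [l2norm_sq, l2norm_sq, dot_expand] at hmain
      nlinarith
    have hd : dot r (A.mulVec xstar) = -(dot ξs (A.mulVec xstar)) := by
      rw [hrξ, dot_neg_left]
    rw [hd] at key
    linarith
  have heq : dot ξs (A.mulVec xstar) = μ * κ xstar :=
    le_antisymm (hfeas xstar) hrev
  have hval : -(1/2) * (l2norm ξs)^2 + dot b ξs =
      (1/2) * (l2norm r)^2 + μ * κ xstar := by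
    rw [l2norm_sq, l2norm_sq, ← heq]
    have hb : dot b ξs = dot ξs ξs + dot (A.mulVec xstar) ξs := by
      rw [← dot_add_left]
      congr 1
      rw [hξs]; module
    have hrr : dot r r = dot ξs ξs := by
      rw [hrξ, dot_neg_neg]
    rw [hb, hrr, dot_comm' (A.mulVec xstar) ξs]
    ring
  refine ⟨fun x => by rw [dot_transpose]; exact hfeas x, hval, ?_⟩
  intro ξ hξfeas
  rw [hval]
  have h1 : dot (Aᵀ.mulVec ξ) xstar ≤ μ * κ xstar := hξfeas xstar
  rw [dot_transpose] at h1
  -- (1/2)dot r r ≥ dot ξ ξs - (1/2) dot ξ ξ  since 0 ≤ dot (ξs - ξ) (ξs - ξ)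
  have hrr : (l2norm r) ^ 2 = dot ξs ξs := by
    rw [l2norm_sq, hrξ, dot_neg_neg]
  have hyoung : 0 ≤ dot (ξs + (-1 : ℝ) • ξ) (ξs + (-1 : ℝ) • ξ) := dot_self_nonneg _
  rw [dot_expand] at hyoung
  have hb : dot b ξ = dot ξs ξ + dot (A.mulVec xstar) ξ := by
    rw [← dot_add_left]
    congr 1
    rw [hξs]; module
  rw [dot_comm' (A.mulVec xstar) ξ] at hb
  rw [l2norm_sq, hrr, hb]
  nlinarith
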